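/- arXiv:2505.19302 — 2 statements merged into one kernel-verified Lean document; each statement's English description precedes it below -/
import Mathlib

section
/- Let s_1, ..., s_n, s_{n+1} be exchangeable real-valued random variables (i.i.d. suffices). Define the threshold ŝ as the ⌈(n+1)(1−α)⌉/n-th empirical quantile of {s_1, ..., s_n}. Then P(s_{n+1} ≤ ŝ) ≥ 1 − α. -/
/-!
The scores are i.i.d., so the law of the score vector is a product measure and is invariant
under permutations of the coordinates: every score has the same probability of having strict
rank `< k` among all `n + 1` scores. Whatever the realization, at least `k` of the `n + 1` scores
have strict rank `< k`, so this common probability is at least `k / (n + 1) ≥ 1 - α`. Finally, if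
fewer than `k` calibration scores lie strictly below the test score, every `t` with at least `k`
calibration scores `≤ t` lies above the test score, and hence so does `ŝ`.
-/

open MeasureTheory ProbabilityTheory Finset
open scoped ENNReal

section Rank

variable {ι α : Type*} [Fintype ι] [LinearOrder α]

def strictRank (x : ι → α) (j : ι) : ℕ := #{i | x i < x j}

theorem strictRank_comp_perm (x : ι → α) (σ : Equiv.Perm ι) (j : ι) :
    strictRank (x ∘ σ) j = strictRank x (σ j) := by
  simp only [strictRank, card_filter]
  exact Equiv.sum_comp σ (fun i => if x i < x (σ j) then 1 else 0)

theorem strictRank_last {n : ℕ} (x : Fin (n + 1) → α) :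
    strictRank x (Fin.last n) = #{i : Fin n | x i.castSucc < x (Fin.last n)} := by
  simp only [strictRank, card_filter, Fin.sum_univ_castSucc, lt_self_iff_false, if_false,
    add_zero]

/-- Among the indices of strict rank `≥ k`, one with the smallest value has at least `k` indices
strictly below it, all of strict rank `< k`. -/
theorem le_card_filter_strictRank_lt {k : ℕ} (hk : k ≤ Fintype.card ι) (x : ι → α) :
    k ≤ #{j | strictRank x j < k} := by
  have hsplit := card_filter_add_card_filter_not (s := univ) fun j => strictRank x j < k
  simp only [not_lt, card_univ] at hsplit
  rcases (univ.filter fun j => k ≤ strictRank x j).eq_empty_or_nonempty with hempty | hne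
  · rw [hempty, card_empty] at hsplit
    omega
  obtain ⟨j₀, hj₀, hmin⟩ := exists_min_image _ x hne
  have hdisj : Disjoint (univ.filter fun i => x i < x j₀)
      (univ.filter fun j => k ≤ strictRank x j) :=
    disjoint_filter.2 fun i _ hlt hi => (hmin i (by simpa using hi)).not_gt hlt
  have hsum := (card_disjUnion _ _ hdisj).symm.trans_le (card_le_univ _)
  have hrank : k ≤ strictRank x j₀ := (mem_filter.1 hj₀).2
  rw [strictRank] at hrank
  omega

end Rank

section OrderStatistic

variable {ι α : Type*} [Fintype ι] [ConditionallyCompleteLinearOrder α]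

def orderStatistic (k : ℕ) (y : ι → α) : α := sInf {t | k ≤ #{i | y i ≤ t}}

theorem le_orderStatistic {k : ℕ} (hk : k ≤ Fintype.card ι) {y : ι → α} {a : α}
    (ha : #{i | y i < a} < k) : a ≤ orderStatistic k y := by
  obtain ⟨b, hb⟩ := (Set.finite_range y).bddAbove
  refine le_csInf ⟨b, ?_⟩ fun t ht => ?_
  · simpa [filter_true_of_mem fun i _ => hb (Set.mem_range_self i)] using hk
  by_contra! hta
  have : #{i | y i ≤ t} ≤ #{i | y i < a} :=
    card_le_card (monotone_filter_right _ fun i _ hi => hi.trans_lt hta)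
  exact (ha.trans_le (ht.trans this)).false

end OrderStatistic

section Exchangeable

variable {ι α : Type*} [Fintype ι] [MeasurableSpace α]

def Exchangeable (π : Measure (ι → α)) : Prop :=
  ∀ σ : Equiv.Perm ι, MeasurePreserving (fun x : ι → α => x ∘ σ) π π

theorem exchangeable_pi (μ : Measure α) [SigmaFinite μ] :
    Exchangeable (Measure.pi fun _ : ι => μ) := by
  intro σ
  convert measurePreserving_piCongrLeft (fun _ : ι => μ) σ.symm using 1
  funext x i
  simp [MeasurableEquiv.coe_piCongrLeft, Equiv.piCongrLeft_apply, eq_rec_constant]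

variable [LinearOrder α] [TopologicalSpace α] [OrderClosedTopology α]
  [SecondCountableTopology α] [OpensMeasurableSpace α]

theorem measurableSet_strictRank_lt (j : ι) (k : ℕ) :
    MeasurableSet {x : ι → α | strictRank x j < k} := by
  have : Measurable fun x : ι → α => strictRank x j := by
    simp only [strictRank, card_filter]
    exact Finset.measurable_sum _ fun i _ =>
      Measurable.ite (measurableSet_lt (measurable_pi_apply i) (measurable_pi_apply j))
        measurable_const measurable_const
  exact this (MeasurableSet.of_discrete (s := Set.Iio k))

theorem Exchangeable.measure_strictRank_lt_eq {π : Measure (ι → α)} (hπ : Exchangeable π)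
    (j j' : ι) (k : ℕ) : π {x | strictRank x j < k} = π {x | strictRank x j' < k} := by
  classical
  have hpre : (fun x : ι → α => x ∘ Equiv.swap j' j) ⁻¹' {x | strictRank x j' < k} =
      {x | strictRank x j < k} := by
    ext x
    simp [strictRank_comp_perm]
  rw [← hpre, (hπ _).measure_preimage (measurableSet_strictRank_lt j' k).nullMeasurableSet]

theorem Exchangeable.mul_measure_univ_le_card_mul_measure_strictRank_lt {π : Measure (ι → α)}
    (hπ : Exchangeable π) {k : ℕ} (hk : k ≤ Fintype.card ι) (j : ι) :
    k * π Set.univ ≤ Fintype.card ι * π {x | strictRank x j < k} := by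
  have hpointwise (x : ι → α) :
      (k : ℝ≥0∞) ≤ ∑ j', {x : ι → α | strictRank x j' < k}.indicator 1 x := by
    simpa [Set.indicator_apply, sum_boole] using le_card_filter_strictRank_lt hk x
  calc (k : ℝ≥0∞) * π Set.univ = ∫⁻ _, (k : ℝ≥0∞) ∂π := (lintegral_const _).symm
    _ ≤ ∫⁻ x, ∑ j', {x : ι → α | strictRank x j' < k}.indicator 1 x ∂π :=
      lintegral_mono hpointwise
    _ = ∑ j', π {x | strictRank x j' < k} := by
      rw [lintegral_finsetSum _ fun j' _ =>
        measurable_one.indicator (measurableSet_strictRank_lt j' k)]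
      simp only [lintegral_indicator_one (measurableSet_strictRank_lt _ k)]
    _ = Fintype.card ι * π {x | strictRank x j < k} := by
      simp [hπ.measure_strictRank_lt_eq _ j]

end Exchangeable

theorem conformal_coverage_general
    {Ω : Type*} [MeasureSpace Ω] [IsProbabilityMeasure (ℙ : Measure Ω)]
    (n : ℕ) (α : ℝ)
    (s : Fin (n + 1) → Ω → ℝ) (hmeas : ∀ i, Measurable (s i))
    (μ : Measure ℝ)
    (hindep : iIndepFun s ℙ)
    (hident : ∀ i, Measure.map (s i) ℙ = μ)
    (k : ℕ) (hk : (k : ℤ) = ⌈((n : ℝ) + 1) * (1 - α)⌉) (hkn : k ≤ n)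
    (shat : Ω → ℝ)
    (hshat : ∀ ω, shat ω =
      sInf {t : ℝ | k ≤ (Finset.univ.filter
        (fun i : Fin n => s i.castSucc ω ≤ t)).card}) :
    1 - α ≤ (ℙ {ω | s (Fin.last n) ω ≤ shat ω}).toReal := by
  set X : Ω → Fin (n + 1) → ℝ := fun ω i => s i ω
  have hX : Measurable X := measurable_pi_lambda _ hmeas
  have : IsProbabilityMeasure μ :=
    hident 0 ▸ Measure.isProbabilityMeasure_map (hmeas 0).aemeasurable
  have hlaw : Measure.map X ℙ = Measure.pi fun _ => μ := by
    rw [hindep.map_fun_eq_pi_map fun i => (hmeas i).aemeasurable]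
    simp_rw [hident]
  have hcover :
      X ⁻¹' {x | strictRank x (Fin.last n) < k} ⊆ {ω | s (Fin.last n) ω ≤ shat ω} := by
    intro ω hω
    show s (Fin.last n) ω ≤ shat ω
    rw [hshat]
    exact le_orderStatistic (by rwa [Fintype.card_fin])
      ((strictRank_last (X ω)).symm.trans_lt hω)
  have hrank :
      (k : ℝ≥0∞) ≤ (n + 1 : ℕ) * ℙ (X ⁻¹' {x | strictRank x (Fin.last n) < k}) := by
    have := (exchangeable_pi μ).mul_measure_univ_le_card_mul_measure_strictRank_lt (k := k)
      (by rw [Fintype.card_fin]; omega) (Fin.last n)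
    rwa [← hlaw, Measure.map_apply hX (measurableSet_strictRank_lt _ _), Measure.map_apply hX
      .univ, Set.preimage_univ, measure_univ, mul_one, Fintype.card_fin] at this
  have hk_real : (k : ℝ) ≤ (n + 1) * (ℙ {ω | s (Fin.last n) ω ≤ shat ω}).toReal := by
    have := ENNReal.toReal_mono (by finiteness)
      (hrank.trans (mul_le_mul_right (measure_mono hcover) _))
    rw [ENNReal.toReal_mul, ENNReal.toReal_natCast, ENNReal.toReal_natCast] at this
    exact_mod_cast this
  have hceil : ((n : ℝ) + 1) * (1 - α) ≤ k := by exact_mod_cast hk ▸ Int.le_ceil _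
  exact le_of_mul_le_mul_left (hceil.trans hk_real) (by positivity)

/-- **Conformal prediction coverage guarantee.**
Scores `s 0, ..., s n` (the first `n` being calibration scores, `s (Fin.last n)` the
test score) are i.i.d. real random variables with common law `μ`.  With
`k = ⌈(n+1)(1-α)⌉` and the threshold `ŝ` defined as the `k/n`-th empirical quantile of
the calibration scores (the smallest real `t` such that at least `k` of the `n`
calibration scores are `≤ t`), we have `P(s_{n+1} ≤ ŝ) ≥ 1 - α`. -/
theorem conformal_coverage
    {Ω : Type*} [MeasureSpace Ω] [IsProbabilityMeasure (ℙ : Measure Ω)]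
    (n : ℕ) (hn : 0 < n) (α : ℝ) (hα : α ∈ Set.Ioo (0 : ℝ) 1)
    (s : Fin (n + 1) → Ω → ℝ) (hmeas : ∀ i, Measurable (s i))
    (μ : Measure ℝ)
    (hindep : iIndepFun s ℙ)
    (hident : ∀ i, Measure.map (s i) ℙ = μ)
    (k : ℕ) (hk : (k : ℤ) = ⌈((n : ℝ) + 1) * (1 - α)⌉) (hkn : k ≤ n)
    (shat : Ω → ℝ)
    (hshat : ∀ ω, shat ω =
      sInf {t : ℝ | k ≤ (Finset.univ.filter
        (fun i : Fin n => s i.castSucc ω ≤ t)).card}) :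
    1 - α ≤ (ℙ {ω | s (Fin.last n) ω ≤ shat ω}).toReal :=
  conformal_coverage_general n α s hmeas μ hindep hident k hk hkn shat hshat
end

section
/- With the conformal threshold ŝ defined as the ⌈(n+1)(1−α)⌉/n-th empirical quantile of i.i.d. continuous calibration scores, the coverage probability also satisfies the upper bound P(s_{n+1} ≤ ŝ) ≤ 1 − α + 1/(n+1). -/
open MeasureTheory ProbabilityTheory
open scoped ENNReal

/-!
Covering forces the test score to lie below the `k`-th smallest calibration score, so fewer
than `k` of all `n + 1` scores lie strictly below it. The scores are i.i.d. from an atomless law,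
hence exchangeable and almost surely distinct: the events "the test score has rank `j`" then have
the same probability as "score `i` has rank `j`" for every `i`, and these `n + 1` events are
almost surely disjoint. So each rank has probability at most `1 / (n + 1)`, and the coverage is
at most `k / (n + 1) < 1 - α + 1 / (n + 1)`.
-/

section Pi

variable {ι α : Type*} [Fintype ι] [MeasurableSpace α]

lemma MeasureTheory.Measure.prod_diagonal_eq_zero [MeasurableEq α] (μ ν : Measure α) [SFinite ν]
    [NullSingletonClass ν] : μ.prod ν (Set.diagonal α) = 0 := by
  rw [Measure.prod_apply measurableSet_diagonal]
  simp [Set.diagonal, Set.preimage]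

lemma MeasureTheory.Measure.ae_injective_pi [MeasurableEq α] (μ : Measure α)
    [IsProbabilityMeasure μ] [NullSingletonClass μ] :
    ∀ᵐ x ∂Measure.pi fun _ : ι => μ, Function.Injective x := by
  have hindep := iIndepFun_pi (μ := fun _ : ι => μ) (X := fun _ => id) fun _ => aemeasurable_id
  have hdiag (i j : ι) (hij : i ≠ j) : Measure.pi (fun _ => μ) {x | x i = x j} = 0 := by
    have hpair := (indepFun_iff_map_prod_eq_prod_map_map (measurable_pi_apply i).aemeasurable
      (measurable_pi_apply j).aemeasurable).1 (hindep.indepFun hij)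
    simp only [(measurePreserving_eval _ _).map_eq] at hpair
    change Measure.pi _ ((fun x : ι → α => (x i, x j)) ⁻¹' Set.diagonal α) = 0
    rw [← Measure.map_apply (by fun_prop) measurableSet_diagonal, hpair]
    exact Measure.prod_diagonal_eq_zero μ μ
  refine ae_all_iff.2 fun i => ae_all_iff.2 fun j => ae_iff.2 ?_
  by_cases hij : i = j
  · simp [hij]
  · simpa [hij] using hdiag i j hij

lemma MeasureTheory.Measure.pi_map_comp_perm (μ : Measure α) [SigmaFinite μ] (σ : Equiv.Perm ι) :
    (Measure.pi fun _ : ι => μ).map (· ∘ σ) = Measure.pi fun _ => μ :=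
  (measurePreserving_arrowCongr' (fun _ => μ) (fun _ => μ) σ.symm (MeasurableEquiv.refl α)
    fun _ => MeasurePreserving.id μ).map_eq

end Pi

namespace Conformal

open Finset

variable {ι : Type*} [Fintype ι]

noncomputable def rank (x : ι → ℝ) (i : ι) : ℕ := #{j | x j < x i}

lemma measurable_rank (i : ι) : Measurable fun x : ι → ℝ => rank x i := by
  simp only [rank, card_filter]
  exact measurable_sum _ fun j _ => Measurable.ite
    (measurableSet_lt (measurable_pi_apply j) (measurable_pi_apply i)) measurable_const
    measurable_const

lemma measurableSet_setOf_rank (i : ι) (p : ℕ → Prop) : MeasurableSet {x : ι → ℝ | p (rank x i)} :=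
  measurable_rank i (MeasurableSet.of_discrete (s := {j | p j}))

lemma rank_comp_perm (x : ι → ℝ) (σ : Equiv.Perm ι) (i : ι) :
    rank (x ∘ σ) i = rank x (σ i) :=
  card_equiv σ (by simp)

lemma rank_lt_rank {x : ι → ℝ} {i j : ι} (h : x i < x j) : rank x i < rank x j :=
  card_lt_card ⟨monotone_filter_right _ fun _ _ hl => hl.trans h,
    fun hsub => lt_irrefl _ (mem_filter.1 (hsub (by simpa using h))).2⟩

lemma rank_injective {x : ι → ℝ} (hx : Function.Injective x) : Function.Injective (rank x) := by
  intro i j h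
  by_contra hij
  rcases (hx.ne hij).lt_or_gt with hlt | hlt
  · exact (rank_lt_rank hlt).ne h
  · exact (rank_lt_rank hlt).ne' h

lemma rank_last {n : ℕ} (x : Fin (n + 1) → ℝ) :
    rank x (Fin.last n) = #{i : Fin n | x i.castSucc < x (Fin.last n)} := by
  simp only [rank, card_filter]
  rw [Fin.sum_univ_castSucc]
  simp

/-- The `k`-th smallest of the values `x i` for `1 ≤ k ≤ card ι`; otherwise it is the junk value
`0` (`sInf` of `univ` or of `∅`). -/
noncomputable def orderStatistic (x : ι → ℝ) (k : ℕ) : ℝ := sInf {t | k ≤ #{i | x i ≤ t}}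

lemma orderStatistic_lt {x : ι → ℝ} {k : ℕ} (hk : k ≠ 0) {y : ℝ}
    (h : k ≤ #{i | x i < y}) : orderStatistic x k < y := by
  have hne : ({i | x i < y} : Finset ι).Nonempty := card_pos.1 ((Nat.pos_of_ne_zero hk).trans_le h)
  set t := ({i | x i < y} : Finset ι).sup' hne x
  have hbdd : BddBelow {t | k ≤ #{i | x i ≤ t}} := by
    obtain ⟨b, hb⟩ := (Set.finite_range x).bddBelow
    refine ⟨b, fun t ht => ?_⟩
    obtain ⟨i, hi⟩ := card_pos.1 ((Nat.pos_of_ne_zero hk).trans_le ht)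
    exact (hb ⟨i, rfl⟩).trans (mem_filter.1 hi).2
  have ht : k ≤ #{i | x i ≤ t} :=
    h.trans (card_le_card (monotone_filter_right _ fun i _ hi => le_sup' x (by simpa using hi)))
  calc orderStatistic x k ≤ t := csInf_le hbdd ht
    _ < y := (sup'_lt_iff hne).2 fun i hi => (mem_filter.1 hi).2

lemma rank_last_lt_of_le_orderStatistic {n k : ℕ} (hk : k ≠ 0) {x : Fin (n + 1) → ℝ}
    (h : x (Fin.last n) ≤ orderStatistic (fun i : Fin n => x i.castSucc) k) :
    rank x (Fin.last n) < k := by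
  by_contra! hle
  rw [rank_last] at hle
  exact h.not_gt (orderStatistic_lt hk hle)

section Exchangeable

variable {P : Measure (ι → ℝ)}

lemma measure_rank_eq_eq (hP : ∀ σ : Equiv.Perm ι, P.map (· ∘ σ) = P) (i i' : ι) (j : ℕ) :
    P {x | rank x i = j} = P {x | rank x i' = j} := by
  classical
  calc P {x | rank x i = j} = P.map (· ∘ Equiv.swap i' i) {x | rank x i = j} := by rw [hP]
    _ = P {x | rank x i' = j} := by
      rw [Measure.map_apply (by fun_prop) (measurableSet_setOf_rank i (· = j))]
      simp [Set.preimage, rank_comp_perm]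

lemma card_mul_measure_rank_eq_le (hP : ∀ σ : Equiv.Perm ι, P.map (· ∘ σ) = P)
    (hinj : ∀ᵐ x ∂P, Function.Injective x) (i : ι) (j : ℕ) :
    Fintype.card ι * P {x | rank x i = j} ≤ P Set.univ := by
  have hdisj : Pairwise (Function.onFun (AEDisjoint P) fun i' => {x | rank x i' = j}) :=
    fun a b hab => measure_mono_null
      (fun x hx hx_inj => hab (rank_injective hx_inj (hx.1.trans hx.2.symm))) (ae_iff.1 hinj)
  calc (Fintype.card ι : ℝ≥0∞) * P {x | rank x i = j} = ∑ i', P {x | rank x i' = j} := by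
        simp [measure_rank_eq_eq hP _ i]
    _ = P (⋃ i', {x | rank x i' = j}) := by
        rw [measure_iUnion₀ hdisj fun i' =>
          (measurableSet_setOf_rank i' (· = j)).nullMeasurableSet, tsum_fintype]
    _ ≤ P Set.univ := measure_mono (Set.subset_univ _)

lemma card_mul_measure_rank_lt_le (hP : ∀ σ : Equiv.Perm ι, P.map (· ∘ σ) = P)
    (hinj : ∀ᵐ x ∂P, Function.Injective x) (i : ι) (k : ℕ) :
    Fintype.card ι * P {x | rank x i < k} ≤ k * P Set.univ := by
  have hcover : {x | rank x i < k} = ⋃ j ∈ range k, {x | rank x i = j} := by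
    ext; simp
  calc (Fintype.card ι : ℝ≥0∞) * P {x | rank x i < k}
      ≤ Fintype.card ι * ∑ j ∈ range k, P {x | rank x i = j} := by
        rw [hcover]; gcongr; exact measure_biUnion_finset_le _ _
    _ = ∑ j ∈ range k, Fintype.card ι * P {x | rank x i = j} := mul_sum _ _ _
    _ ≤ ∑ j ∈ range k, P Set.univ :=
        sum_le_sum fun j _ => card_mul_measure_rank_eq_le hP hinj i j
    _ = k * P Set.univ := by simp

end Exchangeable

lemma card_mul_measure_rank_lt_le_of_iIndepFun {Ω : Type*} [MeasurableSpace Ω] {P : Measure Ω}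
    [IsProbabilityMeasure P] {s : ι → Ω → ℝ} (hmeas : ∀ i, Measurable (s i))
    (hindep : iIndepFun s P) {μ : Measure ℝ} [NullSingletonClass μ]
    (hident : ∀ i, P.map (s i) = μ) (i : ι) (k : ℕ) :
    Fintype.card ι * (P {ω | rank (fun j => s j ω) i < k}).toReal ≤ k := by
  have : IsProbabilityMeasure μ :=
    hident i ▸ Measure.isProbabilityMeasure_map (hmeas i).aemeasurable
  have hlaw : P.map (fun ω j => s j ω) = Measure.pi fun _ => μ := by
    rw [(iIndepFun_iff_map_fun_eq_pi_map fun i => (hmeas i).aemeasurable).1 hindep]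
    simp only [hident]
  have hrank := card_mul_measure_rank_lt_le (Measure.pi_map_comp_perm μ)
    (Measure.ae_injective_pi μ) i k
  rw [measure_univ, mul_one, ← hlaw,
    Measure.map_apply (measurable_pi_lambda _ hmeas) (measurableSet_setOf_rank _ (· < k))] at hrank
  simpa [ENNReal.toReal_mul] using ENNReal.toReal_mono (ENNReal.natCast_ne_top k) hrank

end Conformal

open Conformal

theorem conformal_coverage_upper_bound_general
    {Ω : Type*} [MeasureSpace Ω] [IsProbabilityMeasure (ℙ : Measure Ω)]
    (n : ℕ) (α : ℝ) (hα : α ∈ Set.Ioo (0 : ℝ) 1)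
    (s : Fin (n + 1) → Ω → ℝ) (hmeas : ∀ i, Measurable (s i))
    (μ : Measure ℝ) [NullSingletonClass μ]
    (hindep : iIndepFun s ℙ)
    (hident : ∀ i, Measure.map (s i) ℙ = μ)
    (k : ℕ) (hk : (k : ℤ) = ⌈((n : ℝ) + 1) * (1 - α)⌉)
    (shat : Ω → ℝ)
    (hshat : ∀ ω, shat ω =
      sInf {t : ℝ | k ≤ (Finset.univ.filter
        (fun i : Fin n => s i.castSucc ω ≤ t)).card}) :
    (ℙ {ω | s (Fin.last n) ω ≤ shat ω}).toReal ≤ 1 - α + 1 / ((n : ℝ) + 1) := by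
  have hceil : (k : ℝ) < (n + 1) * (1 - α) + 1 := by
    have := Int.ceil_lt_add_one (((n : ℝ) + 1) * (1 - α))
    rw [← hk] at this
    exact_mod_cast this
  have hk0 : k ≠ 0 := by
    have : (0 : ℝ) < (n + 1) * (1 - α) := mul_pos (by positivity) (by linarith [hα.2])
    have := Int.ceil_pos.2 this
    omega
  have hcover : {ω | s (Fin.last n) ω ≤ shat ω} ⊆ {ω | rank (fun j => s j ω) (Fin.last n) < k} :=
    fun ω hω => rank_last_lt_of_le_orderStatistic hk0 (le_of_le_of_eq hω (hshat ω))
  have hrank := card_mul_measure_rank_lt_le_of_iIndepFun hmeas hindep hident (Fin.last n) k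
  have hn : (0 : ℝ) < n + 1 := by positivity
  calc (ℙ {ω | s (Fin.last n) ω ≤ shat ω}).toReal
      ≤ (ℙ {ω | rank (fun j => s j ω) (Fin.last n) < k}).toReal :=
        ENNReal.toReal_mono (measure_ne_top _ _) (measure_mono hcover)
    _ ≤ k / (n + 1) := by
        rw [le_div_iff₀ hn, mul_comm]
        simpa using hrank
    _ ≤ 1 - α + 1 / (n + 1) := by
        rw [div_le_iff₀ hn, add_mul, one_div_mul_cancel hn.ne']
        linarith

/-- **Conformal prediction coverage upper bound.**
With the conformal threshold `ŝ` defined as the `⌈(n+1)(1-α)⌉/n`-th empirical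
quantile of i.i.d. atomless calibration scores `s 0, ..., s (n-1)` (and the test
score `s (Fin.last n)` i.i.d. with them), the coverage probability also satisfies
`P(s_{n+1} ≤ ŝ) ≤ 1 - α + 1/(n+1)`. -/
theorem conformal_coverage_upper_bound
    {Ω : Type*} [MeasureSpace Ω] [IsProbabilityMeasure (ℙ : Measure Ω)]
    (n : ℕ) (hn : 0 < n) (α : ℝ) (hα : α ∈ Set.Ioo (0 : ℝ) 1)
    (s : Fin (n + 1) → Ω → ℝ) (hmeas : ∀ i, Measurable (s i))
    (μ : Measure ℝ) [NullSingletonClass μ]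
    (hindep : iIndepFun s ℙ)
    (hident : ∀ i, Measure.map (s i) ℙ = μ)
    (k : ℕ) (hk : (k : ℤ) = ⌈((n : ℝ) + 1) * (1 - α)⌉) (hkn : k ≤ n)
    (shat : Ω → ℝ)
    (hshat : ∀ ω, shat ω =
      sInf {t : ℝ | k ≤ (Finset.univ.filter
        (fun i : Fin n => s i.castSucc ω ≤ t)).card}) :
    (ℙ {ω | s (Fin.last n) ω ≤ shat ω}).toReal ≤ 1 - α + 1 / ((n : ℝ) + 1) :=
  conformal_coverage_upper_bound_general n α hα s hmeas μ hindep hident k hk shat hshat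
end
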